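/- arXiv:1203.3740 — 2 statements merged into one kernel-verified Lean document; each statement's English description precedes it below -/
import Mathlib

section
/- Let S be a semigroup and a, a' ∈ S. Then a' ∈ V(a)[H] (i.e. aa'a H a and a'aa' H a') if and only if both aa' and a'a are trace products, i.e. aa' ∈ R_a ∩ L_{a'} and a'a ∈ R_{a'} ∩ L_a. -/
variable {S : Type*} [Semigroup S]

/-- Green's preorder `≤_L`: `a ∈ S¹ b`. -/
def leL (a b : S) : Prop := a = b ∨ ∃ x : S, a = x * b
/-- Green's preorder `≤_R`: `a ∈ b S¹`. -/
def leR (a b : S) : Prop := a = b ∨ ∃ x : S, a = b * x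
/-- Green's preorder `≤_H`. -/
def leH (a b : S) : Prop := leL a b ∧ leR a b
/-- Green's relation `L`. -/
def grL (a b : S) : Prop := leL a b ∧ leL b a
/-- Green's relation `R`. -/
def grR (a b : S) : Prop := leR a b ∧ leR b a
/-- Green's relation `H`. -/
def grH (a b : S) : Prop := leH a b ∧ leH b a
/-- `x` is the group inverse of `a`. -/
def IsGrpInv (a x : S) : Prop := a * x = x * a ∧ a * x * a = a ∧ x * a * x = x
/-- `a` is group invertible. -/
def GrpInvertible (a : S) : Prop := ∃ x : S, IsGrpInv a x
/-- `x ∈ V(a)[H]`: inverse of `a` modulo `H`. -/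
def VH (a x : S) : Prop := grH (a * x * a) a ∧ grH (x * a * x) x
/-- `x ∈ A(a)[H]`: associate of `a` modulo `H`. -/
def AH (a x : S) : Prop := grH (a * x * a) a
/-- `x ∈ V(a)`: reflexive inverse of `a`. -/
def refInv (a x : S) : Prop := a * x * a = a ∧ x * a * x = x
/-- The `H`-class of `a`. -/
def Hclass (a : S) : Set S := {b : S | grH b a}

lemma leL_trans' {a b c : S} (h1 : leL a b) (h2 : leL b c) : leL a c := by
  rcases h1 with rfl | ⟨x, rfl⟩ <;> rcases h2 with rfl | ⟨y, rfl⟩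
  · exact Or.inl rfl
  · exact Or.inr ⟨y, rfl⟩
  · exact Or.inr ⟨x, rfl⟩
  · exact Or.inr ⟨x * y, (mul_assoc x y c).symm⟩

lemma leR_trans' {a b c : S} (h1 : leR a b) (h2 : leR b c) : leR a c := by
  rcases h1 with rfl | ⟨x, rfl⟩ <;> rcases h2 with rfl | ⟨y, rfl⟩
  · exact Or.inl rfl
  · exact Or.inr ⟨y, rfl⟩
  · exact Or.inr ⟨x, rfl⟩
  · exact Or.inr ⟨y * x, mul_assoc c y x⟩

lemma leL_mul_compat {x y : S} (h : leL x y) (z : S) : leL (x * z) (y * z) := by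
  rcases h with rfl | ⟨u, rfl⟩
  · exact Or.inl rfl
  · exact Or.inr ⟨u, mul_assoc u y z⟩

lemma leR_mul_compat (z : S) {x y : S} (h : leR x y) : leR (z * x) (z * y) := by
  rcases h with rfl | ⟨u, rfl⟩
  · exact Or.inl rfl
  · exact Or.inr ⟨u, (mul_assoc z y u).symm⟩

theorem stmt2 (a a' : S) :
    VH a a' ↔
      ((grR (a * a') a ∧ grL (a * a') a') ∧ (grR (a' * a) a' ∧ grL (a' * a) a)) := by
  constructor
  · rintro ⟨⟨⟨_, _⟩, hL2, hR2⟩, ⟨_, _⟩, hL4, hR4⟩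
    refine ⟨⟨⟨Or.inr ⟨a', rfl⟩, leR_trans' hR2 (Or.inr ⟨a, rfl⟩)⟩,
      ⟨Or.inr ⟨a, rfl⟩, leL_trans' hL4 (Or.inr ⟨a', mul_assoc a' a a'⟩)⟩⟩,
      ⟨Or.inr ⟨a, rfl⟩, leR_trans' hR4 (Or.inr ⟨a', rfl⟩)⟩,
      ⟨Or.inr ⟨a', rfl⟩, leL_trans' hL2 (Or.inr ⟨a, mul_assoc a a' a⟩)⟩⟩
  · rintro ⟨⟨⟨_, hRa⟩, ⟨_, hLa'⟩⟩, ⟨⟨_, hRa'⟩, ⟨_, hLa⟩⟩⟩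
    refine ⟨⟨⟨Or.inr ⟨a * a', rfl⟩, Or.inr ⟨a' * a, mul_assoc a a' a⟩⟩,
      leL_trans' hLa (leL_mul_compat hLa' a),
      (mul_assoc a a' a) ▸ leR_trans' hRa (leR_mul_compat a hRa')⟩,
      ⟨Or.inr ⟨a' * a, rfl⟩, Or.inr ⟨a * a', mul_assoc a' a a'⟩⟩,
      leL_trans' hLa' (leL_mul_compat hLa a'),
      (mul_assoc a' a a') ▸ leR_trans' hRa' (leR_mul_compat a' hRa)⟩
end

section
/- Let S be a semigroup and a, a' ∈ S with a' ∈ V(a)[H]. Then H_a H_{a'} H_a = H_a = a H_{a'} a, where H_a H_{a'} H_a = {x y z : x, z ∈ H_a, y ∈ H_{a'}} and a H_{a'} a = {a y a : y ∈ H_{a'}}. -/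
variable {S : Type*} [Semigroup S]

/-! ### Auxiliary lemmas -/

lemma leL_iff' {a b : S} : leL a b ↔ ∃ x : WithOne S, (a : WithOne S) = x * b := by
  constructor
  · rintro (rfl | ⟨x, rfl⟩)
    · exact ⟨1, (one_mul _).symm⟩
    · exact ⟨x, by push_cast; rfl⟩
  · rintro ⟨x, hx⟩
    by_cases h1 : x = 1
    · subst h1; rw [one_mul] at hx; exact Or.inl (by exact_mod_cast hx)
    · obtain ⟨s, rfl⟩ := WithOne.ne_one_iff_exists.mp h1
      exact Or.inr ⟨s, by exact_mod_cast hx⟩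

lemma leR_iff' {a b : S} : leR a b ↔ ∃ x : WithOne S, (a : WithOne S) = b * x := by
  constructor
  · rintro (rfl | ⟨x, rfl⟩)
    · exact ⟨1, (mul_one _).symm⟩
    · exact ⟨x, by push_cast; rfl⟩
  · rintro ⟨x, hx⟩
    by_cases h1 : x = 1
    · subst h1; rw [mul_one] at hx; exact Or.inl (by exact_mod_cast hx)
    · obtain ⟨s, rfl⟩ := WithOne.ne_one_iff_exists.mp h1
      exact Or.inr ⟨s, by exact_mod_cast hx⟩

lemma grH_refl' (c : S) : grH c c :=
  ⟨⟨Or.inl rfl, Or.inl rfl⟩, ⟨Or.inl rfl, Or.inl rfl⟩⟩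

lemma monoid_mem' {M : Type*} [Monoid M] (A A' X Y Z u v p q s s' t t' m m' n n' g g' k k' : M)
    (h1 : A = u*(A*(A'*A))) (h2 : A = A*(A'*(A*v)))
    (h3 : A' = p*(A'*(A*A'))) (h4 : A' = A'*(A*(A'*q)))
    (hx1 : X = s*A) (hx2 : A = s'*X) (hx3 : X = A*t) (hx4 : A = X*t')
    (hy1 : Y = m*A') (hy2 : A' = m'*Y) (hy3 : Y = A'*n) (hy4 : A' = Y*n')
    (hz1 : Z = g*A) (hz2 : A = g'*Z) (hz3 : Z = A*k) (hz4 : A = Z*k') :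
    (∃ c, X*(Y*Z) = c*A) ∧ (∃ c, X*(Y*Z) = A*c) ∧
    (∃ c, A = c*(X*(Y*Z))) ∧ (∃ c, A = (X*(Y*Z))*c) := by
  -- helper regroupings
  have Fu : ∀ w : M, u*(A*(A'*(A*w))) = A*w := by
    intro w
    calc u*(A*(A'*(A*w))) = (u*(A*(A'*A)))*w := by simp [mul_assoc]
    _ = A*w := by rw [← h1]
  have F' : ∀ w : M, p*(A'*(A*(A'*w))) = A'*w := by
    intro w
    calc p*(A'*(A*(A'*w))) = (p*(A'*(A*A')))*w := by simp [mul_assoc]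
    _ = A'*w := by rw [← h3]
  have e_m : ∀ w : M, m'*(Y*w) = A'*w := by intro w; rw [hy2, mul_assoc]
  have e_s : ∀ w : M, s'*(X*w) = A*w := by intro w; rw [hx2, mul_assoc]
  have e_y : ∀ w : M, Y*w = A'*(n*w) := by intro w; rw [hy3, mul_assoc]
  have e_n : ∀ w : M, Y*(n'*w) = A'*w := by intro w; rw [hy4, mul_assoc]
  have e_k : ∀ w : M, Z*(k'*w) = A*w := by intro w; rw [hz4, mul_assoc]
  refine ⟨⟨X*(Y*g), ?_⟩, ⟨t*(Y*Z), ?_⟩, ?_, ?_⟩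
  · rw [hz1]; simp [mul_assoc]
  · rw [hx3]; simp [mul_assoc]
  · -- a ≤_L xyz
    have step_c : u*(A*(m'*(Y*Z))) = Z := by
      calc u*(A*(m'*(Y*Z))) = u*(A*(A'*Z)) := by rw [e_m]
      _ = u*(A*(A'*(A*k))) := by rw [← hz3]
      _ = A*k := Fu k
      _ = Z := hz3.symm
    have step_g : p*(A'*(s'*(X*(Y*Z)))) = Y*Z := by
      calc p*(A'*(s'*(X*(Y*Z)))) = p*(A'*(A*(Y*Z))) := by rw [e_s]
      _ = p*(A'*(A*(A'*(n*Z)))) := by rw [← e_y]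
      _ = A'*(n*Z) := F' _
      _ = Y*Z := (e_y Z).symm
    refine ⟨g'*(u*(A*(m'*(p*(A'*s'))))), ?_⟩
    calc A = g'*Z := hz2
    _ = g'*(u*(A*(m'*(Y*Z)))) := by rw [step_c]
    _ = g'*(u*(A*(m'*(p*(A'*(s'*(X*(Y*Z)))))))) := by rw [step_g]
    _ = (g'*(u*(A*(m'*(p*(A'*s'))))))*(X*(Y*Z)) := by simp [mul_assoc]
  · -- a ≤_R xyz
    have step_k : X*(Y*(n'*(A*v))) = X := by
      calc X*(Y*(n'*(A*v))) = s*(A*(Y*(n'*(A*v)))) := by rw [hx1, mul_assoc]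
      _ = s*((A*Y)*(n'*(A*v))) := by rw [← mul_assoc A Y]
      _ = s*(A*(Y*(n'*(A*v)))) := by rw [mul_assoc]
      _ = X := by rw [show A*(Y*(n'*(A*v))) = A*(A'*(A*v)) by rw [e_n], ← h2, ← hx1]
    have step_d : Y*(Z*(k'*(A'*q))) = Y := by
      calc Y*(Z*(k'*(A'*q))) = Y*(A*(A'*q)) := by rw [e_k]
      _ = m*(A'*(A*(A'*q))) := by rw [hy1, mul_assoc]
      _ = m*A' := by rw [← h4]
      _ = Y := hy1.symm
    refine ⟨k'*((A'*q)*(n'*(A*(v*t')))), ?_⟩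
    calc A = X*t' := hx4
    _ = (X*(Y*(n'*(A*v))))*t' := by rw [step_k]
    _ = (X*((Y*(Z*(k'*(A'*q))))*(n'*(A*v))))*t' := by rw [step_d]
    _ = (X*(Y*Z))*(k'*((A'*q)*(n'*(A*(v*t'))))) := by simp [mul_assoc]

lemma monoid_surj' {M : Type*} [Monoid M] (A A' B u v p q w1 w2 w3 w4 : M)
    (h1 : A = u*(A*(A'*A))) (h2 : A = A*(A'*(A*v)))
    (h3 : A' = p*(A'*(A*A'))) (h4 : A' = A'*(A*(A'*q)))
    (hb1 : B = w1*A) (hb2 : A = w2*B) (hb3 : B = A*w3) (hb4 : A = B*w4) :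
    (∃ c, (p*(A'*(B*(A'*q)))) = c*A') ∧ (∃ c, A' = c*((p*(A'*(B*(A'*q)))))) ∧
    (∃ c, (p*(A'*(B*(A'*q)))) = A'*c) ∧ (∃ c, A' = (p*(A'*(B*(A'*q))))*c) ∧
    A*((p*(A'*(B*(A'*q))))*A) = B := by
  have F' : ∀ w : M, p*(A'*(A*(A'*w))) = A'*w := by
    intro w
    calc p*(A'*(A*(A'*w))) = (p*(A'*(A*A')))*w := by simp [mul_assoc]
    _ = A'*w := by rw [← h3]
  have e_w2 : ∀ w : M, w2*(B*w) = A*w := by intro w; rw [hb2, mul_assoc]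
  have e_w4 : ∀ w : M, B*(w4*w) = A*w := by intro w; rw [hb4, mul_assoc]
  -- expansions of B
  have hBr : B = A*(A'*(A*(v*w3))) := by
    conv_lhs => rw [hb3, h2]
    simp [mul_assoc]
  have hBl : B = w1*(u*(A*(A'*A))) := by
    conv_lhs => rw [hb1, h1]
  -- local identities s1, s2
  have s1 : A*(p*(A'*B)) = B := by
    calc A*(p*(A'*B)) = A*(p*(A'*(A*(A'*(A*(v*w3)))))) := by rw [← hBr]
    _ = A*(A'*(A*(v*w3))) := by rw [F']
    _ = B := hBr.symm
  have s2 : B*(A'*(q*A)) = B := by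
    calc B*(A'*(q*A)) = (w1*(u*(A*(A'*A))))*(A'*(q*A)) := by rw [← hBl]
    _ = w1*(u*(A*((A'*(A*(A'*q)))*A))) := by simp [mul_assoc]
    _ = w1*(u*(A*(A'*A))) := by rw [← h4]
    _ = B := hBl.symm
  have hAYA : A*((p*(A'*(B*(A'*q))))*A) = B := by
    calc A*((p*(A'*(B*(A'*q))))*A) = A*(p*(A'*(B*(A'*(q*A))))) := by simp [mul_assoc]
    _ = A*(p*(A'*B)) := by rw [s2]
    _ = B := s1
  have ht1r : p*(A'*B) = A'*(A*(v*w3)) := by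
    calc p*(A'*B) = p*(A'*(A*(A'*(A*(v*w3))))) := by rw [← hBr]
    _ = A'*(A*(v*w3)) := F' _
  have ht2 : A*(p*(A'*(B*(A'*q)))) = B*(A'*q) := by
    calc A*(p*(A'*(B*(A'*q)))) = (A*(p*(A'*B)))*(A'*q) := by simp [mul_assoc]
    _ = B*(A'*q) := by rw [s1]
  have ht1' : (p*(A'*(B*(A'*q))))*A = p*(A'*B) := by
    calc (p*(A'*(B*(A'*q))))*A = p*(A'*(B*(A'*(q*A)))) := by simp [mul_assoc]
    _ = p*(A'*B) := by rw [s2]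
  refine ⟨⟨p*(A'*(w1*(u*A))), ?_⟩, ⟨(A'*(A*(p*(A'*w2))))*A, ?_⟩,
          ⟨(A*(v*w3))*(A'*q), ?_⟩, ⟨A*(w4*(A'*(q*(A*A')))), ?_⟩, hAYA⟩
  · -- y ≤_L a'
    calc p*(A'*(B*(A'*q))) = p*(A'*((w1*(u*(A*(A'*A))))*(A'*q))) := by rw [← hBl]
    _ = (p*(A'*(w1*(u*A))))*(A'*(A*(A'*q))) := by simp [mul_assoc]
    _ = (p*(A'*(w1*(u*A))))*A' := by rw [← h4]
  · -- a' ≤_L y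
    calc A' = A'*(A*(A'*q)) := h4
    _ = A'*(A*(p*(A'*(A*(A'*q))))) := by rw [F']
    _ = A'*(A*(p*(A'*(w2*(B*(A'*q)))))) := by rw [e_w2]
    _ = A'*(A*(p*(A'*(w2*(A*(p*(A'*(B*(A'*q))))))))) := by rw [ht2]
    _ = ((A'*(A*(p*(A'*w2))))*A)*(p*(A'*(B*(A'*q)))) := by simp [mul_assoc]
  · -- y ≤_R a'
    calc p*(A'*(B*(A'*q))) = (p*(A'*B))*(A'*q) := by simp [mul_assoc]
    _ = (A'*(A*(v*w3)))*(A'*q) := by rw [ht1r]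
    _ = A'*((A*(v*w3))*(A'*q)) := by rw [mul_assoc]
  · -- a' ≤_R y
    calc A' = p*(A'*(A*A')) := h3
    _ = p*((A'*(A*(A'*q)))*(A*A')) := by rw [← h4]
    _ = p*(A'*(A*(A'*(q*(A*A'))))) := by simp [mul_assoc]
    _ = p*(A'*(B*(w4*(A'*(q*(A*A')))))) := by rw [e_w4]
    _ = (p*(A'*B))*(w4*(A'*(q*(A*A')))) := by simp [mul_assoc]
    _ = ((p*(A'*(B*(A'*q))))*A)*(w4*(A'*(q*(A*A')))) := by rw [ht1']
    _ = (p*(A'*(B*(A'*q))))*(A*(w4*(A'*(q*(A*A'))))) := by rw [mul_assoc]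

lemma vh_extract (a a' : S) (h : VH a a') :
    ∃ u v p q : WithOne S,
      (a : WithOne S) = u*(↑a*(↑a'*↑a)) ∧ (a : WithOne S) = ↑a*(↑a'*(↑a*v)) ∧
      (a' : WithOne S) = p*(↑a'*(↑a*↑a')) ∧ (a' : WithOne S) = ↑a'*(↑a*(↑a'*q)) := by
  obtain ⟨u, hu⟩ := leL_iff'.mp h.1.2.1
  obtain ⟨v, hv⟩ := leR_iff'.mp h.1.2.2
  obtain ⟨p, hp⟩ := leL_iff'.mp h.2.2.1
  obtain ⟨q, hq⟩ := leR_iff'.mp h.2.2.2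
  push_cast at hu hv hp hq
  simp only [mul_assoc] at hu hv hp hq
  exact ⟨u, v, p, q, hu, hv, hp, hq⟩

lemma key_mem (a a' : S) (h : VH a a') {x y z : S}
    (hx : grH x a) (hy : grH y a') (hz : grH z a) : grH (x * y * z) a := by
  obtain ⟨u, v, p, q, h1, h2, h3, h4⟩ := vh_extract a a' h
  obtain ⟨s, hx1⟩ := leL_iff'.mp hx.1.1
  obtain ⟨s', hx2⟩ := leL_iff'.mp hx.2.1
  obtain ⟨t, hx3⟩ := leR_iff'.mp hx.1.2
  obtain ⟨t', hx4⟩ := leR_iff'.mp hx.2.2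
  obtain ⟨m, hy1⟩ := leL_iff'.mp hy.1.1
  obtain ⟨m', hy2⟩ := leL_iff'.mp hy.2.1
  obtain ⟨n, hy3⟩ := leR_iff'.mp hy.1.2
  obtain ⟨n', hy4⟩ := leR_iff'.mp hy.2.2
  obtain ⟨g, hz1⟩ := leL_iff'.mp hz.1.1
  obtain ⟨g', hz2⟩ := leL_iff'.mp hz.2.1
  obtain ⟨k, hz3⟩ := leR_iff'.mp hz.1.2
  obtain ⟨k', hz4⟩ := leR_iff'.mp hz.2.2
  obtain ⟨⟨c1, e1⟩, ⟨c2, e2⟩, ⟨c3, e3⟩, ⟨c4, e4⟩⟩ :=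
    monoid_mem' (a : WithOne S) ↑a' ↑x ↑y ↑z u v p q s s' t t' m m' n n' g g' k k'
      h1 h2 h3 h4 hx1 hx2 hx3 hx4 hy1 hy2 hy3 hy4 hz1 hz2 hz3 hz4
  have coe3 : ((x*y*z : S) : WithOne S) = (x : WithOne S)*((y : WithOne S)*(z : WithOne S)) := by
    push_cast; rw [mul_assoc]
  exact ⟨⟨leL_iff'.mpr ⟨c1, by rw [coe3]; exact e1⟩, leR_iff'.mpr ⟨c2, by rw [coe3]; exact e2⟩⟩,
    ⟨leL_iff'.mpr ⟨c3, by rw [coe3]; exact e3⟩, leR_iff'.mpr ⟨c4, by rw [coe3]; exact e4⟩⟩⟩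

lemma key_surj (a a' : S) (h : VH a a') {b : S} (hb : grH b a) :
    ∃ y : S, grH y a' ∧ b = a * y * a := by
  obtain ⟨u, v, p, q, h1, h2, h3, h4⟩ := vh_extract a a' h
  obtain ⟨w1, hb1⟩ := leL_iff'.mp hb.1.1
  obtain ⟨w2, hb2⟩ := leL_iff'.mp hb.2.1
  obtain ⟨w3, hb3⟩ := leR_iff'.mp hb.1.2
  obtain ⟨w4, hb4⟩ := leR_iff'.mp hb.2.2
  obtain ⟨⟨c1, e1⟩, ⟨c2, e2⟩, ⟨c3, e3⟩, ⟨c4, e4⟩, eB⟩ :=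
    monoid_surj' (a : WithOne S) ↑a' ↑b u v p q w1 w2 w3 w4 h1 h2 h3 h4 hb1 hb2 hb3 hb4
  have hex : ∃ y : S, (y : WithOne S) = p*((a' : WithOne S)*((b : WithOne S)*((a' : WithOne S)*q))) := by
    rcases eq_or_ne p 1 with hp | hp
    · rcases eq_or_ne q 1 with hq | hq
      · exact ⟨a'*(b*a'), by subst hp hq; push_cast; simp [mul_assoc]⟩
      · obtain ⟨qs, rfl⟩ := WithOne.ne_one_iff_exists.mp hq
        exact ⟨a'*(b*(a'*qs)), by subst hp; push_cast; simp [mul_assoc]⟩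
    · obtain ⟨ps, rfl⟩ := WithOne.ne_one_iff_exists.mp hp
      rcases eq_or_ne q 1 with hq | hq
      · exact ⟨ps*(a'*(b*a')), by subst hq; push_cast; simp [mul_assoc]⟩
      · obtain ⟨qs, rfl⟩ := WithOne.ne_one_iff_exists.mp hq
        exact ⟨ps*(a'*(b*(a'*qs))), by push_cast; simp [mul_assoc]⟩
  obtain ⟨y, hycoe⟩ := hex
  refine ⟨y, ⟨⟨leL_iff'.mpr ⟨c1, by rw [hycoe]; exact e1⟩,
      leR_iff'.mpr ⟨c3, by rw [hycoe]; exact e3⟩⟩,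
      ⟨leL_iff'.mpr ⟨c2, by rw [hycoe]; exact e2⟩,
      leR_iff'.mpr ⟨c4, by rw [hycoe]; exact e4⟩⟩⟩, ?_⟩
  have hcoe : ((a*y*a : S) : WithOne S) = ((b : S) : WithOne S) := by
    push_cast
    rw [mul_assoc, hycoe]
    exact eB
  exact_mod_cast hcoe.symm

theorem stmt3 (a a' : S) (h : VH a a') :
    {w : S | ∃ x ∈ Hclass a, ∃ y ∈ Hclass a', ∃ z ∈ Hclass a, w = x * y * z} = Hclass a ∧
    {w : S | ∃ y ∈ Hclass a', w = a * y * a} = Hclass a := by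
  constructor
  · ext w
    simp only [Hclass, Set.mem_setOf_eq]
    constructor
    · rintro ⟨x, hx, y, hy, z, hz, rfl⟩
      exact key_mem a a' h hx hy hz
    · intro hw
      obtain ⟨y, hy, hba⟩ := key_surj a a' h hw
      exact ⟨a, grH_refl' a, y, hy, a, grH_refl' a, hba⟩
  · ext w
    simp only [Hclass, Set.mem_setOf_eq]
    constructor
    · rintro ⟨y, hy, rfl⟩
      exact key_mem a a' h (grH_refl' a) hy (grH_refl' a)
    · intro hw
      obtain ⟨y, hy, hba⟩ := key_surj a a' h hw
      exact ⟨y, hy, hba⟩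
end
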